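/- The Cubical Sperner lemma with Octahedral Labels implies the Octahedral Sperner lemma with Octahedral Labels. Precisely: suppose that for every n ≥ 1, every triangulation T of □^n, and every label function λ : V(T) → ext(◇^n) such that every vertex x ∈ V(T) with x_i ∈ {−1,1} satisfies λ(x) ≠ −x_i·e_i, the triangulation T contains a complementary edge. Then for every n ≥ 1, every triangulation T of ◇^n, and every label function λ : V(T) → ext(◇^n) such that every boundary vertex x ∈ V(T) with |x_1|+…+|x_n| = 1 satisfies, for all 1 ≤ i ≤ n, that x_i ≥ 0 implies λ(x) ≠ −e_i and x_i ≤ 0 implies λ(x) ≠ e_i, the triangulation T contains a complementary edge. -/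

import Mathlib

/-!
A triangulation `K` of `◇ⁿ` extends to a triangulation of `□ⁿ` whose new vertices are the sign
vectors `q ∈ {-1, 0, 1}ⁿ` with at least two nonzero entries. The new simplices join a face `τ` of
`K` on the boundary of `◇ⁿ` with a chain `C` of such sign vectors, ordered by conformality (`v`
is below `q` when every nonzero `v i` has the sign of `q i`), every vertex of `τ` lying below
every element of `C`. Repeatedly splitting off `sign x` places each point `x` of `□ⁿ` outside
`◇ⁿ` in such a simplex, and the resulting normal form `x = y + ∑ c_q • q` is unique, which gives
affine independence and proper intersections.

A new vertex `q` is labelled `sign (q j) • e_j` for some `j` with `q j ≠ 0`, which satisfies the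
cubical boundary condition; the octahedral boundary condition says that boundary vertices `v` of
`K` are labelled `sign (v j) • e_j` as well. On a new simplex whose chain has top `t`, every label
is therefore `t j • e_j` with `t j ≠ 0`, so no two are opposite and the complementary edge given
by the cubical lemma lies in `K`.
-/

open scoped Classical

/-- The `n`-dimensional cube `□ⁿ = [−1,1]ⁿ`: the unit ball of the `ℓ∞` norm in `ℝⁿ`. -/
def cube (n : ℕ) : Set (Fin n → ℝ) := {x | ∀ i, |x i| ≤ 1}

/-- The `n`-dimensional octahedron `◇ⁿ`: the unit ball of the `ℓ¹` norm in `ℝⁿ`. -/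
def octa (n : ℕ) : Set (Fin n → ℝ) := {x | ∑ i, |x i| ≤ 1}

/-- The extreme points of the `n`-dimensional octahedron: `{±e₁, …, ±eₙ}`. -/
def extOcta (n : ℕ) : Set (Fin n → ℝ) :=
  {v | ∃ i : Fin n, v = Pi.single i 1 ∨ v = -Pi.single i 1}

/-- **Cubical Sperner with Octahedral Labels** as a statement. -/
def CubicalSpernerStatement : Prop :=
  ∀ (n : ℕ), 1 ≤ n →
  ∀ (K : Geometry.SimplicialComplex ℝ (Fin n → ℝ)), K.faces.Finite →
  K.space = cube n →
  ∀ lab : (Fin n → ℝ) → (Fin n → ℝ),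
  (∀ x ∈ K.vertices, lab x ∈ extOcta n) →
  (∀ x ∈ K.vertices, ∀ i : Fin n, (x i = -1 ∨ x i = 1) →
    lab x ≠ (-(x i)) • (Pi.single i 1 : Fin n → ℝ)) →
  ∃ σ ∈ K.faces, ∃ v₁ ∈ σ, ∃ v₂ ∈ σ, lab v₁ = -lab v₂

/-- **Octahedral Sperner with Octahedral Labels** as a statement. -/
def OctahedralSpernerStatement : Prop :=
  ∀ (n : ℕ), 1 ≤ n →
  ∀ (K : Geometry.SimplicialComplex ℝ (Fin n → ℝ)), K.faces.Finite →
  K.space = octa n →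
  ∀ lab : (Fin n → ℝ) → (Fin n → ℝ),
  (∀ x ∈ K.vertices, lab x ∈ extOcta n) →
  (∀ x ∈ K.vertices, (∑ i, |x i|) = 1 → ∀ i : Fin n,
    (0 ≤ x i → lab x ≠ -Pi.single i 1) ∧ (x i ≤ 0 → lab x ≠ Pi.single i 1)) →
  ∃ σ ∈ K.faces, ∃ v₁ ∈ σ, ∃ v₂ ∈ σ, lab v₁ = -lab v₂

open Finset Geometry

namespace CubeOctahedron

variable {n : ℕ}

lemma octa_subset_cube : octa n ⊆ cube n := fun x hx i =>
  (single_le_sum (fun j _ => abs_nonneg (x j)) (mem_univ i)).trans hx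

lemma convex_cube : Convex ℝ (cube n) := by
  have : cube n = Set.univ.pi fun _ => Set.Icc (-1 : ℝ) 1 := by
    ext x
    simp only [cube, Set.mem_ofPred_eq, Set.mem_univ_pi, Set.mem_Icc, abs_le]
  rw [this]
  exact convex_pi fun _ _ => convex_Icc _ _

/-! ### Signs and conformality -/

lemma sign_mul_self_eq_abs (r : ℝ) : Real.sign r * r = |r| := by
  rcases lt_trichotomy r 0 with h | rfl | h
  · rw [Real.sign_of_neg h, abs_of_neg h, neg_one_mul]
  · simp
  · rw [Real.sign_of_pos h, abs_of_pos h, one_mul]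

lemma abs_sign_le_one (r : ℝ) : |Real.sign r| ≤ 1 := by
  rcases Real.sign_apply_eq r with h | h | h <;> simp [h]

lemma sign_eq_sign_of_mul_pos {a b : ℝ} (h : 0 < a * b) : Real.sign a = Real.sign b := by
  rcases lt_trichotomy a 0 with ha | rfl | ha
  · rw [Real.sign_of_neg ha, Real.sign_of_neg (by nlinarith)]
  · simp at h
  · rw [Real.sign_of_pos ha, Real.sign_of_pos (by nlinarith)]

lemma abs_eq_mul_of_abs_le_mul {a s : ℝ} (hs : |s| ≤ 1) (h : |a| ≤ s * a) : |a| = s * a :=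
  h.antisymm <| calc
    s * a ≤ |s| * |a| := (le_abs_self _).trans (abs_mul s a).le
    _ ≤ |a| := mul_le_of_le_one_left (abs_nonneg a) hs

lemma sign_mul_le_abs (r a : ℝ) : Real.sign r * a ≤ |a| :=
  (le_abs_self _).trans <| by
    rw [abs_mul]
    exact mul_le_of_le_one_left (abs_nonneg a) (abs_sign_le_one r)

lemma sign_mul_abs_eq (r : ℝ) : Real.sign r * |r| = r := by
  rcases lt_trichotomy r 0 with h | rfl | h
  · rw [Real.sign_of_neg h, abs_of_neg h]; ring
  · simp
  · rw [Real.sign_of_pos h, abs_of_pos h, one_mul]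

lemma abs_sign_of_ne_zero {r : ℝ} (hr : r ≠ 0) : |Real.sign r| = 1 := by
  rcases Real.sign_apply_eq_of_ne_zero r hr with h | h <;> simp [h]

def SignLE (v q : Fin n → ℝ) : Prop := ∀ i, v i ≠ 0 → 0 < v i * q i

instance : Std.Refl (SignLE (n := n)) := ⟨fun _ _ hv => mul_self_pos.2 hv⟩

lemma SignLE.eq_zero {v q : Fin n → ℝ} (h : SignLE v q) {i : Fin n} (hq : q i = 0) : v i = 0 := by
  by_contra hv
  simpa [hq] using h i hv

lemma SignLE.trans {u v w : Fin n → ℝ} (huv : SignLE u v) (hvw : SignLE v w) : SignLE u w := by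
  intro i hu
  have h₁ := huv i hu
  have h₂ := hvw i (fun hv => by simp [hv] at h₁)
  nlinarith [mul_pos h₁ h₂, mul_self_nonneg (v i)]

lemma signLE_iff_abs_eq {v q : Fin n → ℝ} : SignLE v q ↔ ∀ i, |v i| = Real.sign (q i) * v i := by
  refine ⟨fun h i => ?_, fun h i hv => ?_⟩
  · by_cases hv : v i = 0
    · simp [hv]
    · rw [← sign_eq_sign_of_mul_pos (h i hv), sign_mul_self_eq_abs]
  · have hpos : 0 < Real.sign (q i) * v i := h i ▸ abs_pos.2 hv
    rcases lt_trichotomy (q i) 0 with hq | hq | hq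
    · rw [Real.sign_of_neg hq] at hpos; nlinarith
    · simp [hq] at hpos
    · rw [Real.sign_of_pos hq] at hpos; nlinarith

lemma SignLE.abs_eq {v q : Fin n → ℝ} (h : SignLE v q) (i : Fin n) :
    |v i| = Real.sign (q i) * v i :=
  signLE_iff_abs_eq.1 h i

lemma signLE_sign_right (x : Fin n → ℝ) : SignLE x (Real.sign ∘ x) := fun i hx => by
  simpa [mul_comm] using Real.sign_mul_pos_of_ne_zero (x i) hx

lemma signLE_sign_left (x : Fin n → ℝ) : SignLE (Real.sign ∘ x) x := fun i hx =>
  Real.sign_mul_pos_of_ne_zero (x i) fun h => hx (by simp [h])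

lemma SignLE.add {u v q : Fin n → ℝ} (hu : SignLE u q) (hv : SignLE v q) : SignLE (u + v) q :=
  signLE_iff_abs_eq.2 fun i => abs_eq_mul_of_abs_le_mul (abs_sign_le_one _) <| by
    simpa [mul_add, ← hu.abs_eq, ← hv.abs_eq] using abs_add_le (u i) (v i)

lemma signLE_sum {ι : Type*} {F : Finset ι} {a : ι → ℝ} {z : ι → Fin n → ℝ} {q : Fin n → ℝ}
    (ha : ∀ j ∈ F, 0 ≤ a j) (hz : ∀ j ∈ F, SignLE (z j) q) :
    SignLE (∑ j ∈ F, a j • z j) q := by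
  refine signLE_iff_abs_eq.2 fun i => abs_eq_mul_of_abs_le_mul (abs_sign_le_one _) ?_
  simp only [Finset.sum_apply, Pi.smul_apply, smul_eq_mul, mul_sum]
  refine (abs_sum_le_sum_abs _ _).trans (sum_le_sum fun j hj => ?_)
  rw [abs_mul, abs_of_nonneg (ha j hj), (hz j hj).abs_eq]
  exact le_of_eq (by ring)

lemma abs_sum_smul_apply {ι : Type*} {F : Finset ι} {a : ι → ℝ} {z : ι → Fin n → ℝ}
    {q : Fin n → ℝ} (ha : ∀ j ∈ F, 0 ≤ a j) (hz : ∀ j ∈ F, SignLE (z j) q) (i : Fin n) :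
    |(∑ j ∈ F, a j • z j) i| = ∑ j ∈ F, a j * |z j i| := by
  rw [(signLE_sum ha hz).abs_eq, Finset.sum_apply, mul_sum]
  refine sum_congr rfl fun j hj => ?_
  rw [(hz j hj).abs_eq, Pi.smul_apply, smul_eq_mul]
  ring

lemma signLE_of_sum_abs_le {v x : Fin n → ℝ} (h : ∑ i, |v i| ≤ ∑ i, Real.sign (x i) * v i) :
    SignLE v x := by
  have heq := (sum_eq_sum_iff_of_le fun i _ => sign_mul_le_abs (x i) (v i)).1
    (h.antisymm' (sum_le_sum fun i _ => sign_mul_le_abs (x i) (v i)))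
  exact signLE_iff_abs_eq.2 fun i => (heq i (mem_univ i)).symm

/-! ### Outer sign vectors and chain decompositions -/

/-- The centres of the faces of `□ⁿ` of codimension at least two: the vertices added to a
triangulation of `◇ⁿ` to extend it to `□ⁿ`. -/
structure IsOuterSign (q : Fin n → ℝ) : Prop where
  sign_eq : ∀ i, Real.sign (q i) = q i
  one_lt : 1 < ∑ i, |q i|

namespace IsOuterSign

variable {p q : Fin n → ℝ}

lemma abs_apply (hq : IsOuterSign q) {i : Fin n} (hi : q i ≠ 0) : |q i| = 1 := by
  rw [← hq.sign_eq i]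
  rcases Real.sign_apply_eq_of_ne_zero _ hi with h | h <;> simp [h]

lemma mem_cube (hq : IsOuterSign q) : q ∈ cube n := fun i =>
  hq.sign_eq i ▸ abs_sign_le_one _

lemma notMem_octa (hq : IsOuterSign q) : q ∉ octa n :=
  not_le.2 hq.one_lt

lemma apply_eq_sign_of_signLE (hq : IsOuterSign q) (h : SignLE p q) {i : Fin n} (hp : p i ≠ 0) :
    q i = Real.sign (p i) := by
  rw [← hq.sign_eq i]
  exact (sign_eq_sign_of_mul_pos (h i hp)).symm

lemma abs_apply_le_of_signLE (hp : IsOuterSign p) (hq : IsOuterSign q) (h : SignLE p q)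
    (i : Fin n) : |p i| ≤ |q i| := by
  by_cases hpi : p i = 0
  · simp [hpi]
  · have hqi : q i ≠ 0 := fun hqi => by simpa [hqi] using h i hpi
    rw [hp.abs_apply hpi, hq.abs_apply hqi]

end IsOuterSign

lemma exists_signLE_top {D : Finset (Fin n → ℝ)} (hD : D.Nonempty)
    (houter : ∀ q ∈ D, IsOuterSign q) (hchain : IsChain SignLE (D : Set (Fin n → ℝ))) :
    ∃ t ∈ D, ∀ p ∈ D, SignLE p t := by
  obtain ⟨t, ht, hmax⟩ := D.exists_max_image (fun q => ∑ i, |q i|) hD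
  refine ⟨t, ht, fun p hp => ?_⟩
  rcases hchain.total hp ht with h | h
  · exact h
  have hle i : |t i| ≤ |p i| := (houter t ht).abs_apply_le_of_signLE (houter p hp) h i
  have heq := (sum_eq_sum_iff_of_le fun i _ => hle i).1
    ((sum_le_sum fun i _ => hle i).antisymm (hmax p hp))
  intro i hpi
  have hti : t i ≠ 0 := by
    rw [← abs_ne_zero, heq i (mem_univ i)]
    exact abs_ne_zero.2 hpi
  simpa [mul_comm] using h i hti

/-- The normal form of a point `∑ z ∈ τ ∪ C, a z • z` of a join face with total weight
`w = ∑ a z` (see `IsJoinFace.chainDecomp`): `D` is the part of `C` carrying weight and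
`y = ∑ v ∈ τ, a v • v`, whose `ℓ¹` norm is the weight carried by `τ`. -/
structure ChainDecomp (x : Fin n → ℝ) (w : ℝ) (D : Finset (Fin n → ℝ)) (c : (Fin n → ℝ) → ℝ)
    (y : Fin n → ℝ) : Prop where
  outer : ∀ q ∈ D, IsOuterSign q
  chain : IsChain SignLE (D : Set (Fin n → ℝ))
  pos : ∀ q ∈ D, 0 < c q
  signLE : ∀ q ∈ D, SignLE y q
  sum_abs : ∑ i, |y i| + ∑ q ∈ D, c q = w
  eq : x = y + ∑ q ∈ D, c q • q

namespace ChainDecomp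

variable {x y : Fin n → ℝ} {w : ℝ} {D : Finset (Fin n → ℝ)} {c : (Fin n → ℝ) → ℝ}

lemma signLE_top (hd : ChainDecomp x w D c y) {t : Fin n → ℝ} (ht : t ∈ D)
    (htop : ∀ p ∈ D, SignLE p t) : SignLE x t :=
  hd.eq ▸ (hd.signLE t ht).add (signLE_sum (fun q hq => (hd.pos q hq).le) htop)

lemma abs_apply (hd : ChainDecomp x w D c y) (i : Fin n) :
    |x i| = |y i| + ∑ q ∈ D, c q * |q i| := by
  rcases D.eq_empty_or_nonempty with rfl | hD
  · simp [hd.eq]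
  obtain ⟨t, ht, htop⟩ := exists_signLE_top hD hd.outer hd.chain
  have hsum := signLE_sum (fun q hq => (hd.pos q hq).le) htop
  rw [(hd.signLE_top ht htop).abs_eq, hd.eq, Pi.add_apply, mul_add, ← (hd.signLE t ht).abs_eq,
    ← hsum.abs_eq, abs_sum_smul_apply (fun q hq => (hd.pos q hq).le) htop]

lemma top_eq (hd : ChainDecomp x w D c y) {t : Fin n → ℝ} (ht : t ∈ D)
    (htop : ∀ p ∈ D, SignLE p t) : t = Real.sign ∘ x := by
  funext i
  by_cases hti : t i = 0
  · simp [hti, (hd.signLE_top ht htop).eq_zero hti]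
  have hx : 0 < |x i| := by
    rw [hd.abs_apply i]
    have hle := single_le_sum (f := fun q => c q * |q i|)
      (fun q hq => mul_nonneg (hd.pos q hq).le (abs_nonneg _)) ht
    exact add_pos_of_nonneg_of_pos (abs_nonneg _)
      ((mul_pos (hd.pos t ht) (abs_pos.2 hti)).trans_le hle)
  exact (hd.outer t ht).apply_eq_sign_of_signLE (hd.signLE_top ht htop) (abs_pos.1 hx)

lemma sum_abs_eq (hd : ChainDecomp x w D c y) :
    ∑ i, |x i| = w + ∑ q ∈ D, c q * (∑ i, |q i| - 1) := by
  simp_rw [hd.abs_apply, sum_add_distrib, mul_sub, sum_sub_distrib, mul_one, ← hd.sum_abs,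
    mul_sum]
  rw [sum_comm]
  ring

lemma le_sum_abs (hd : ChainDecomp x w D c y) : w ≤ ∑ i, |x i| := by
  rw [hd.sum_abs_eq, le_add_iff_nonneg_right]
  exact sum_nonneg fun q hq => mul_nonneg (hd.pos q hq).le (sub_nonneg.2 (hd.outer q hq).one_lt.le)

lemma eq_empty_iff (hd : ChainDecomp x w D c y) : D = ∅ ↔ ∑ i, |x i| = w := by
  refine ⟨fun h => by simp [hd.sum_abs_eq, h], fun h => ?_⟩
  by_contra hD
  have := sum_pos (fun q hq => mul_pos (hd.pos q hq) (sub_pos.2 (hd.outer q hq).one_lt))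
    (nonempty_iff_ne_empty.2 hD)
  linarith [hd.sum_abs_eq]

lemma erase (hd : ChainDecomp x w D c y) {t : Fin n → ℝ} (ht : t ∈ D) :
    ChainDecomp (x - c t • t) (w - c t) (D.erase t) c y where
  outer q hq := hd.outer q (mem_of_mem_erase hq)
  chain := hd.chain.mono (coe_subset.2 (erase_subset t D))
  pos q hq := hd.pos q (mem_of_mem_erase hq)
  signLE q hq := hd.signLE q (mem_of_mem_erase hq)
  sum_abs := by rw [← hd.sum_abs, ← add_sum_erase D c ht]; ring
  eq := by rw [hd.eq, ← add_sum_erase D _ ht]; abel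

lemma sub_smul (hd : ChainDecomp x w D c y) {t : Fin n → ℝ} (ht : t ∈ D) {m : ℝ}
    (hm : m < c t) :
    ChainDecomp (x - m • t) (w - m) D (Function.update c t (c t - m)) y where
  outer := hd.outer
  chain := hd.chain
  pos q hq := by
    by_cases hqt : q = t
    · subst hqt; simpa using hm
    · simpa [hqt] using hd.pos q hq
  signLE := hd.signLE
  sum_abs := by
    rw [← hd.sum_abs, ← add_sum_erase D _ ht, ← add_sum_erase D c ht,
      sum_congr rfl fun q hq => Function.update_of_ne (ne_of_mem_erase hq) _ _]
    simp only [Function.update_self]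
    ring
  eq := by
    have herase : ∑ q ∈ D.erase t, Function.update c t (c t - m) q • q
        = ∑ q ∈ D.erase t, c q • q :=
      sum_congr rfl fun q hq => by rw [Function.update_of_ne (ne_of_mem_erase hq)]
    rw [hd.eq, ← add_sum_erase D _ ht, ← add_sum_erase D _ ht, herase]
    simp only [Function.update_self, _root_.sub_smul]
    abel

end ChainDecomp

theorem ChainDecomp.unique {x y₁ y₂ : Fin n → ℝ} {w : ℝ} {D₁ D₂ : Finset (Fin n → ℝ)}
    {c₁ c₂ : (Fin n → ℝ) → ℝ} (h₁ : ChainDecomp x w D₁ c₁ y₁) (h₂ : ChainDecomp x w D₂ c₂ y₂) :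
    D₁ = D₂ ∧ y₁ = y₂ ∧ ∀ q ∈ D₁, c₁ q = c₂ q := by
  generalize hN : #D₁ + #D₂ = N
  induction N using Nat.strong_induction_on generalizing x w D₁ D₂ c₁ c₂ with
  | _ N ih =>
  rcases D₁.eq_empty_or_nonempty with rfl | hD₁
  · obtain rfl : D₂ = ∅ := h₂.eq_empty_iff.2 (h₁.eq_empty_iff.1 rfl)
    refine ⟨rfl, ?_, by simp⟩
    simpa using h₁.eq.symm.trans h₂.eq
  have hD₂ : D₂.Nonempty := nonempty_iff_ne_empty.2 fun h =>
    hD₁.ne_empty (h₁.eq_empty_iff.2 (h₂.eq_empty_iff.1 h))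
  obtain ⟨t, ht₁, htop₁⟩ := exists_signLE_top hD₁ h₁.outer h₁.chain
  obtain ⟨t₂, ht₂, htop₂⟩ := exists_signLE_top hD₂ h₂.outer h₂.chain
  rw [(h₂.top_eq ht₂ htop₂).trans (h₁.top_eq ht₁ htop₁).symm] at ht₂
  have hlt₁ := card_erase_lt_of_mem ht₁
  have hlt₂ := card_erase_lt_of_mem ht₂
  -- Peeling `min (c₁ t) (c₂ t) • t` off both decompositions keeps `t` in exactly one of them
  -- unless the two coefficients agree.
  rcases lt_trichotomy (c₁ t) (c₂ t) with hc | hc | hc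
  · obtain ⟨hD, -, -⟩ := ih _ (by omega) (h₁.erase ht₁) (h₂.sub_smul ht₂ hc) rfl
    exact absurd (hD ▸ ht₂) (notMem_erase t D₁)
  · obtain ⟨hD, hy, hc'⟩ := ih _ (by omega) (h₁.erase ht₁) (hc ▸ h₂.erase ht₂) rfl
    refine ⟨by rw [← insert_erase ht₁, ← insert_erase ht₂, hD], hy, fun q hq => ?_⟩
    by_cases hqt : q = t
    · rwa [hqt]
    · exact hc' q (mem_erase.2 ⟨hqt, hq⟩)
  · obtain ⟨hD, -, -⟩ := ih _ (by omega) (h₁.sub_smul ht₁ hc) (h₂.erase ht₂) rfl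
    exact absurd (hD ▸ ht₁) (notMem_erase t D₂)

/-! ### The extended triangulation -/

lemma affineIndependent_of_sum_eq_zero {E : Type*} [AddCommGroup E] [Module ℝ E] {s : Finset E}
    (h : ∀ w : E → ℝ, ∑ z ∈ s, w z = 0 → ∑ z ∈ s, w z • z = 0 → ∀ z ∈ s, w z = 0) :
    AffineIndependent ℝ ((↑) : s → E) := by
  rw [affineIndependent_iff]
  intro t w hw₀ hw₁ e he
  let W : E → ℝ := fun z => if hz : z ∈ s then if ⟨z, hz⟩ ∈ t then w ⟨z, hz⟩ else 0 else 0
  have hW (e : s) : W e = if e ∈ t then w e else 0 := by simp [W]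
  have h₀ : ∑ z ∈ s, W z = 0 := by
    rw [← sum_coe_sort, ← hw₀]
    simp_rw [hW]
    rw [sum_ite_mem, univ_inter]
  have h₁ : ∑ z ∈ s, W z • z = 0 := by
    rw [← sum_coe_sort, ← hw₁]
    simp_rw [hW, ite_smul, zero_smul]
    rw [sum_ite_mem, univ_inter]
  simpa [hW, he] using h W h₀ h₁ e e.2

lemma _root_.Convex.smul_add_sum_smul_mem {E : Type*} [AddCommGroup E] [Module ℝ E] {s : Set E}
    (hs : Convex ℝ s) {u : E} (hu : u ∈ s) {D : Finset E} (hD : ∀ q ∈ D, q ∈ s) {a : ℝ} {c : E → ℝ}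
    (ha : 0 ≤ a) (hc : ∀ q ∈ D, 0 ≤ c q) (h₁ : a + ∑ q ∈ D, c q = 1) :
    a • u + ∑ q ∈ D, c q • q ∈ s := by
  simpa [sum_insertNone] using hs.sum_mem (t := insertNone D) (w := fun o => o.elim a c)
    (z := fun o => o.elim u id) (by rintro (_ | q) hq; exacts [ha, hc q (by simpa using hq)])
    (by simpa [sum_insertNone] using h₁)
    (by rintro (_ | q) hq; exacts [hu, hD q (by simpa using hq)])

lemma exists_mem_convexHull_inter_of_sum_smul_eq {E : Type*} [AddCommGroup E] [Module ℝ E]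
    {K : SimplicialComplex ℝ E} {σ₁ σ₂ : Finset E} (hσ₁ : σ₁ ∈ K.faces) (hσ₂ : σ₂ ∈ K.faces)
    {a₁ a₂ : E → ℝ} (ha₁ : ∀ v ∈ σ₁, 0 ≤ a₁ v) (ha₂ : ∀ v ∈ σ₂, 0 ≤ a₂ v)
    (hpos : 0 < ∑ v ∈ σ₁, a₁ v) (hsum : ∑ v ∈ σ₁, a₁ v = ∑ v ∈ σ₂, a₂ v)
    (hsmul : ∑ v ∈ σ₁, a₁ v • v = ∑ v ∈ σ₂, a₂ v • v) :
    ∃ u ∈ convexHull ℝ (↑σ₁ ∩ ↑σ₂ : Set E), ∑ v ∈ σ₁, a₁ v • v = (∑ v ∈ σ₁, a₁ v) • u := by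
  have hu₂ : σ₁.centerMass a₁ id ∈ convexHull ℝ ↑σ₂ := by
    rw [show σ₁.centerMass a₁ id = σ₂.centerMass a₂ id by simp [centerMass, hsum, hsmul]]
    exact σ₂.centerMass_mem_convexHull ha₂ (hsum ▸ hpos) fun v hv => hv
  exact ⟨_, K.inter_subset_convexHull hσ₁ hσ₂
    ⟨σ₁.centerMass_mem_convexHull ha₁ hpos fun v hv => hv, hu₂⟩,
    by simp [centerMass, smul_inv_smul₀ hpos.ne']⟩

/-- The new simplices: a face `τ` of `K` on the boundary of `◇ⁿ` (or `τ = ∅`) joined with a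
chain `C` of outer sign vectors above it. -/
structure IsJoinFace (K : SimplicialComplex ℝ (Fin n → ℝ)) (τ C : Finset (Fin n → ℝ)) : Prop where
  base : τ = ∅ ∨ τ ∈ K.faces
  on_sphere : ∀ v ∈ τ, ∑ i, |v i| = 1
  outer : ∀ q ∈ C, IsOuterSign q
  chain : IsChain SignLE (C : Set (Fin n → ℝ))
  signLE : ∀ v ∈ τ, ∀ q ∈ C, SignLE v q

namespace IsJoinFace

variable {K : SimplicialComplex ℝ (Fin n → ℝ)} {τ C τ₁ C₁ τ₂ C₂ : Finset (Fin n → ℝ)}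

lemma mem_faces (hf : IsJoinFace K τ C) (hτ : τ.Nonempty) : τ ∈ K.faces :=
  hf.base.resolve_left hτ.ne_empty

lemma mono (hf : IsJoinFace K τ C) {τ' C' : Finset (Fin n → ℝ)} (hτ : τ' ⊆ τ) (hC : C' ⊆ C) :
    IsJoinFace K τ' C' where
  base := τ'.eq_empty_or_nonempty.imp_right fun h => K.down_closed (hf.mem_faces (h.mono hτ)) hτ h
  on_sphere v hv := hf.on_sphere v (hτ hv)
  outer q hq := hf.outer q (hC hq)
  chain := hf.chain.mono (coe_subset.2 hC)
  signLE v hv q hq := hf.signLE v (hτ hv) q (hC hq)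

lemma disjoint (hf : IsJoinFace K τ C) : Disjoint τ C :=
  disjoint_left.2 fun v hvτ hvC => (hf.outer v hvC).notMem_octa (hf.on_sphere v hvτ).le

lemma sum_abs_sum_smul (hf : IsJoinFace K τ C) (hC : C.Nonempty) {a : (Fin n → ℝ) → ℝ}
    (ha : ∀ v ∈ τ, 0 ≤ a v) : ∑ i, |(∑ v ∈ τ, a v • v) i| = ∑ v ∈ τ, a v := by
  obtain ⟨q, hq⟩ := hC
  simp_rw [abs_sum_smul_apply ha fun v hv => hf.signLE v hv q hq]
  rw [sum_comm]
  exact sum_congr rfl fun v hv => by rw [← mul_sum, hf.on_sphere v hv, mul_one]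

lemma chainDecomp (hf : IsJoinFace K τ C) (hC : C.Nonempty) {a : (Fin n → ℝ) → ℝ}
    (ha : ∀ z ∈ τ ∪ C, 0 ≤ a z) :
    ChainDecomp (∑ z ∈ τ ∪ C, a z • z) (∑ z ∈ τ ∪ C, a z) {q ∈ C | 0 < a q} a
      (∑ v ∈ τ, a v • v) := by
  have hpos {q} (hq : q ∈ C) (h : a q ≠ 0) : 0 < a q := (ha q (mem_union_right τ hq)).lt_of_ne' h
  refine ⟨fun q hq => hf.outer q (mem_filter.1 hq).1,
    hf.chain.mono (coe_subset.2 (filter_subset _ C)), fun q hq => (mem_filter.1 hq).2,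
    fun q hq => signLE_sum (fun v hv => ha v (mem_union_left C hv))
      fun v hv => hf.signLE v hv q (mem_filter.1 hq).1, ?_, ?_⟩
  · rw [hf.sum_abs_sum_smul hC fun v hv => ha v (mem_union_left C hv), sum_union hf.disjoint,
      sum_filter_of_ne fun q hq => hpos hq]
  · rw [sum_union hf.disjoint, sum_filter_of_ne fun q hq h => hpos hq fun h' => h (by simp [h'])]

lemma weights_unique (hf₁ : IsJoinFace K τ₁ C₁) (hC₁ : C₁.Nonempty) (hf₂ : IsJoinFace K τ₂ C₂)
    (hC₂ : C₂.Nonempty) {a₁ a₂ : (Fin n → ℝ) → ℝ} (ha₁ : ∀ z ∈ τ₁ ∪ C₁, 0 ≤ a₁ z)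
    (ha₂ : ∀ z ∈ τ₂ ∪ C₂, 0 ≤ a₂ z) (hsum : ∑ z ∈ τ₁ ∪ C₁, a₁ z = ∑ z ∈ τ₂ ∪ C₂, a₂ z)
    (hx : ∑ z ∈ τ₁ ∪ C₁, a₁ z • z = ∑ z ∈ τ₂ ∪ C₂, a₂ z • z) :
    {q ∈ C₁ | 0 < a₁ q} = {q ∈ C₂ | 0 < a₂ q} ∧ (∀ q ∈ {q ∈ C₁ | 0 < a₁ q}, a₁ q = a₂ q) ∧
      ∑ v ∈ τ₁, a₁ v • v = ∑ v ∈ τ₂, a₂ v • v ∧ ∑ v ∈ τ₁, a₁ v = ∑ v ∈ τ₂, a₂ v := by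
  have hd₂ := hf₂.chainDecomp hC₂ ha₂
  rw [← hx, ← hsum] at hd₂
  obtain ⟨hD, hy, hc⟩ := (hf₁.chainDecomp hC₁ ha₁).unique hd₂
  refine ⟨hD, hc, hy, ?_⟩
  rw [← hf₁.sum_abs_sum_smul hC₁ fun v hv => ha₁ v (mem_union_left C₁ hv), hy,
    hf₂.sum_abs_sum_smul hC₂ fun v hv => ha₂ v (mem_union_left C₂ hv)]

lemma affineIndependent (hf : IsJoinFace K τ C) (hC : C.Nonempty) :
    AffineIndependent ℝ ((↑) : (τ ∪ C : Finset (Fin n → ℝ)) → Fin n → ℝ) := by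
  refine affineIndependent_of_sum_eq_zero fun W hW₀ hW₁ z hz => ?_
  have hsum : ∑ z ∈ τ ∪ C, (W z)⁺ = ∑ z ∈ τ ∪ C, (W z)⁻ := by
    rw [← sub_eq_zero, ← sum_sub_distrib, ← hW₀]
    exact sum_congr rfl fun z _ => posPart_sub_negPart (W z)
  have hx : ∑ z ∈ τ ∪ C, (W z)⁺ • z = ∑ z ∈ τ ∪ C, (W z)⁻ • z := by
    rw [← sub_eq_zero, ← sum_sub_distrib, ← hW₁]
    exact sum_congr rfl fun z _ => by rw [← _root_.sub_smul, posPart_sub_negPart]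
  obtain ⟨hD, hc, hy, ha⟩ := hf.weights_unique hC hf hC (fun z _ => posPart_nonneg (W z))
    (fun z _ => negPart_nonneg (W z)) hsum hx
  rw [← posPart_sub_negPart (W z), sub_eq_zero]
  rcases mem_union.1 hz with hzτ | hzC
  · exact (K.indep (hf.mem_faces ⟨z, hzτ⟩)).eq_of_sum_eq_sum_subtype ha hy z hzτ
  by_cases hzP : 0 < (W z)⁺
  · exact hc z (mem_filter.2 ⟨hzC, hzP⟩)
  have hzQ : ¬ 0 < (W z)⁻ := fun h => by
    have hzD : z ∈ {q ∈ C | 0 < (W q)⁻} := mem_filter.2 ⟨hzC, h⟩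
    rw [← hD] at hzD
    exact hzP (mem_filter.1 hzD).2
  linarith [posPart_nonneg (W z), negPart_nonneg (W z)]

lemma inter_subset_convexHull (hf₁ : IsJoinFace K τ₁ C₁) (hC₁ : C₁.Nonempty)
    (hf₂ : IsJoinFace K τ₂ C₂) (hC₂ : C₂.Nonempty) :
    convexHull ℝ ↑(τ₁ ∪ C₁) ∩ convexHull ℝ ↑(τ₂ ∪ C₂) ⊆
      convexHull ℝ (↑(τ₁ ∪ C₁) ∩ ↑(τ₂ ∪ C₂) : Set (Fin n → ℝ)) := by
  rintro x ⟨hx₁, hx₂⟩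
  obtain ⟨a₁, ha₁, hs₁, rfl⟩ := mem_convexHull'.1 hx₁
  obtain ⟨a₂, ha₂, hs₂, hx⟩ := mem_convexHull'.1 hx₂
  obtain ⟨hD, -, hy, ha⟩ := hf₁.weights_unique hC₁ hf₂ hC₂ ha₁ ha₂ (hs₁.trans hs₂.symm) hx.symm
  have hτ₁ : ∀ v ∈ τ₁, 0 ≤ a₁ v := fun v hv => ha₁ v (mem_union_left C₁ hv)
  have hτ₂ : ∀ v ∈ τ₂, 0 ≤ a₂ v := fun v hv => ha₂ v (mem_union_left C₂ hv)
  have hd := hf₁.chainDecomp hC₁ ha₁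
  rw [hs₁] at hd
  have hnorm := hd.sum_abs
  rw [hf₁.sum_abs_sum_smul hC₁ hτ₁] at hnorm
  have hDsub : ∀ q ∈ {q ∈ C₁ | 0 < a₁ q}, q ∈ convexHull ℝ (↑(τ₁ ∪ C₁) ∩ ↑(τ₂ ∪ C₂) : Set _) :=
    fun q hq => subset_convexHull ℝ _ ⟨mem_union_right τ₁ (mem_filter.1 hq).1,
      mem_union_right τ₂ (mem_filter.1 (hD ▸ hq)).1⟩
  have hDpos : ∀ q ∈ {q ∈ C₁ | 0 < a₁ q}, 0 ≤ a₁ q := fun q hq => (mem_filter.1 hq).2.le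
  rw [hd.eq]
  rcases (sum_nonneg hτ₁).eq_or_lt with ha0 | hapos
  · have hy0 : ∑ v ∈ τ₁, a₁ v • v = 0 := by
      have h := hf₁.sum_abs_sum_smul hC₁ hτ₁
      rw [← ha0, sum_eq_zero_iff_of_nonneg fun i _ => abs_nonneg _] at h
      exact funext fun i => abs_eq_zero.1 (h i (mem_univ i))
    rw [hy0, zero_add]
    exact (convex_convexHull ℝ _).sum_mem hDpos (by linarith) hDsub
  obtain ⟨u, hu, hyu⟩ := exists_mem_convexHull_inter_of_sum_smul_eq
    (hf₁.mem_faces (nonempty_of_sum_ne_zero hapos.ne'))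
    (hf₂.mem_faces (nonempty_of_sum_ne_zero (ha ▸ hapos).ne')) hτ₁ hτ₂ hapos ha hy
  rw [hyu]
  exact (convex_convexHull ℝ _).smul_add_sum_smul_mem
    (convexHull_mono (Set.inter_subset_inter (coe_subset.2 subset_union_left)
      (coe_subset.2 subset_union_left)) hu) hDsub hapos.le hDpos hnorm

lemma inter_subset_convexHull_of_mem_faces (hK : K.space = octa n) (hf : IsJoinFace K τ C)
    (hC : C.Nonempty) {σ : Finset (Fin n → ℝ)} (hσ : σ ∈ K.faces) :
    convexHull ℝ ↑σ ∩ convexHull ℝ ↑(τ ∪ C) ⊆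
      convexHull ℝ (↑σ ∩ ↑(τ ∪ C) : Set (Fin n → ℝ)) := by
  rintro x ⟨hxσ, hx⟩
  obtain ⟨a, ha, hs, rfl⟩ := mem_convexHull'.1 hx
  have hτ : ∀ v ∈ τ, 0 ≤ a v := fun v hv => ha v (mem_union_left C hv)
  have hd := hf.chainDecomp hC ha
  rw [hs] at hd
  have hoct : _ ∈ octa n := hK ▸ K.convexHull_subset_space hσ hxσ
  -- A point of `◇ⁿ` puts no weight on the outer sign vectors.
  have hD := hd.eq_empty_iff.2 (le_antisymm hoct hd.le_sum_abs)
  have hnorm := hd.sum_abs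
  rw [hD, sum_empty, add_zero, hf.sum_abs_sum_smul hC hτ] at hnorm
  have hxτ : ∑ z ∈ τ ∪ C, a z • z ∈ convexHull ℝ ↑τ := by
    rw [hd.eq, hD, sum_empty, add_zero]
    exact mem_convexHull'.2 ⟨a, hτ, hnorm, rfl⟩
  refine convexHull_mono (Set.inter_subset_inter_right _ (coe_subset.2 subset_union_left)) ?_
  exact K.inter_subset_convexHull hσ
    (hf.mem_faces (nonempty_of_sum_ne_zero (f := a) (by rw [hnorm]; exact one_ne_zero))) ⟨hxσ, hxτ⟩

end IsJoinFace

def joinFaces (K : SimplicialComplex ℝ (Fin n → ℝ)) : Set (Finset (Fin n → ℝ)) :=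
  {f | ∃ τ C, IsJoinFace K τ C ∧ C.Nonempty ∧ τ ∪ C = f}

lemma IsJoinFace.union_mem {K : SimplicialComplex ℝ (Fin n → ℝ)} {τ C : Finset (Fin n → ℝ)}
    (hf : IsJoinFace K τ C) (hne : (τ ∪ C).Nonempty) : τ ∪ C ∈ K.faces ∪ joinFaces K := by
  rcases C.eq_empty_or_nonempty with rfl | hC
  · rw [union_empty] at hne ⊢
    exact .inl (hf.mem_faces hne)
  · exact .inr ⟨τ, C, hf, hC, rfl⟩

lemma nonempty_of_mem_joinFaces {K : SimplicialComplex ℝ (Fin n → ℝ)} {f : Finset (Fin n → ℝ)}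
    (hf : f ∈ K.faces ∪ joinFaces K) : f.Nonempty := by
  rcases hf with hf | ⟨τ, C, -, hC, rfl⟩
  · exact K.nonempty_of_mem_faces hf
  · exact hC.mono subset_union_right

lemma mem_joinFaces_of_subset {K : SimplicialComplex ℝ (Fin n → ℝ)} {f g : Finset (Fin n → ℝ)}
    (hf : f ∈ K.faces ∪ joinFaces K) (hgf : g ⊆ f) (hg : g.Nonempty) :
    g ∈ K.faces ∪ joinFaces K := by
  rcases hf with hf | ⟨τ, C, hf, -, rfl⟩
  · exact .inl (K.down_closed hf hgf hg)
  · have hsplit : g ∩ τ ∪ g ∩ C = g := by rw [← inter_union_distrib_left, inter_eq_left.2 hgf]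
    rw [← hsplit] at hg ⊢
    exact (hf.mono inter_subset_right inter_subset_right).union_mem hg

noncomputable def extendToCube (K : SimplicialComplex ℝ (Fin n → ℝ)) (hK : K.space = octa n) :
    SimplicialComplex ℝ (Fin n → ℝ) where
  faces := K.faces ∪ joinFaces K
  isRelLowerSet_faces _ hf :=
    ⟨nonempty_of_mem_joinFaces hf, fun _ hgf hg => mem_joinFaces_of_subset hf hgf hg⟩
  indep := by
    rintro _ (hf | ⟨τ, C, hf, hC, rfl⟩)
    · exact K.indep hf
    · exact hf.affineIndependent hC
  inter_subset_convexHull := by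
    rintro s t (hs | ⟨τ₁, C₁, hf₁, hC₁, rfl⟩) (ht | ⟨τ₂, C₂, hf₂, hC₂, rfl⟩)
    · exact K.inter_subset_convexHull hs ht
    · exact hf₂.inter_subset_convexHull_of_mem_faces hK hC₂ hs
    · rw [Set.inter_comm, Set.inter_comm (↑(τ₁ ∪ C₁) : Set (Fin n → ℝ)) ↑t]
      exact hf₁.inter_subset_convexHull_of_mem_faces hK hC₁ ht
    · exact hf₁.inter_subset_convexHull hC₁ hf₂ hC₂

/-! ### Covering the cube -/

lemma exists_face_signLE {K : SimplicialComplex ℝ (Fin n → ℝ)} (hK : K.space = octa n)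
    {x : Fin n → ℝ} (hx : ∑ i, |x i| = 1) :
    ∃ τ ∈ K.faces, x ∈ convexHull ℝ ↑τ ∧ ∀ v ∈ τ, ∑ i, |v i| = 1 ∧ SignLE v x := by
  obtain ⟨σ, hσ, hxσ⟩ := K.mem_space_iff.1 (hK ▸ hx.le : x ∈ K.space)
  obtain ⟨a, ha, hs, hax⟩ := mem_convexHull'.1 hxσ
  -- `v ↦ ∑ i, sign (x i) * v i` is at most `1` on `◇ⁿ` and equals `1` at `x`, so it equals `1`
  -- at every vertex carrying weight; such a vertex is then on the boundary and conformal to `x`.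
  set φ : (Fin n → ℝ) → ℝ := fun v => ∑ i, Real.sign (x i) * v i
  have hφ : ∀ v ∈ σ, φ v ≤ ∑ i, |v i| ∧ ∑ i, |v i| ≤ 1 := fun v hv =>
    ⟨sum_le_sum fun i _ => sign_mul_le_abs _ _, (hK ▸ K.subset_space hσ hv : v ∈ octa n)⟩
  have hzero : ∑ v ∈ σ, a v * (1 - φ v) = 0 := by
    have hφx : ∑ v ∈ σ, a v * φ v = φ x := by
      simp only [φ, mul_sum]
      rw [sum_comm]
      refine sum_congr rfl fun i _ => ?_
      have hxi : x i = ∑ v ∈ σ, a v * v i := by simp [← hax, Finset.sum_apply]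
      rw [hxi, mul_sum]
      exact sum_congr rfl fun v _ => by ring
    simp only [mul_sub, mul_one, sum_sub_distrib, hs, hφx, φ, sign_mul_self_eq_abs, hx, sub_self]
  have hface : ∀ v ∈ σ, a v ≠ 0 → ∑ i, |v i| = 1 ∧ SignLE v x := by
    intro v hv hav
    have hterm := (sum_eq_zero_iff_of_nonneg fun v hv =>
      mul_nonneg (ha v hv) (sub_nonneg.2 ((hφ v hv).1.trans (hφ v hv).2))).1 hzero v hv
    have hφv : φ v = 1 := by
      rcases mul_eq_zero.1 hterm with h | h
      · exact absurd h hav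
      · linarith
    exact ⟨le_antisymm (hφ v hv).2 (hφv.ge.trans (hφ v hv).1),
      signLE_of_sum_abs_le ((hφ v hv).2.trans hφv.ge)⟩
  have hτ {M : Type} [AddCommMonoid M] {f : (Fin n → ℝ) → M} (hf : ∀ v, a v = 0 → f v = 0) :
      ∑ v ∈ σ with ∑ i, |v i| = 1 ∧ SignLE v x, f v = ∑ v ∈ σ, f v :=
    sum_filter_of_ne fun v hv hfv => hface v hv fun h => hfv (hf v h)
  have hτs := (hτ fun v h => h).trans hs
  refine ⟨_, K.down_closed hσ (filter_subset _ σ)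
    (nonempty_of_sum_ne_zero (by rw [hτs]; exact one_ne_zero)),
    mem_convexHull'.2 ⟨a, fun v hv => ha v (mem_filter.1 hv).1, hτs,
      (hτ fun v h => by simp [h]).trans hax⟩, fun v hv => (mem_filter.1 hv).2⟩

lemma isOuterSign_sign {x : Fin n → ℝ} (hx : x ∈ cube n) (h1 : 1 < ∑ i, |x i|) :
    IsOuterSign (Real.sign ∘ x) where
  sign_eq i := by rcases Real.sign_apply_eq (x i) with h | h | h <;> simp [h, Real.sign_of_neg]
  one_lt := h1.trans_le <| sum_le_sum fun i _ => by
    by_cases hxi : x i = 0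
    · simp [hxi]
    · simpa [abs_sign_of_ne_zero hxi] using hx i

section Peel

variable {x : Fin n → ℝ} {t : ℝ}

noncomputable def peel (x : Fin n → ℝ) (t : ℝ) : Fin n → ℝ :=
  (1 - t)⁻¹ • (x - t • (Real.sign ∘ x))

lemma peel_apply (x : Fin n → ℝ) (t : ℝ) (i : Fin n) :
    peel x t i = (1 - t)⁻¹ * (Real.sign (x i) * (|x i| - t)) := by
  simp only [peel, Pi.smul_apply, Pi.sub_apply, Function.comp_apply, smul_eq_mul]
  nth_rewrite 1 [← sign_mul_abs_eq (x i)]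
  ring

lemma eq_peel (ht : t < 1) : x = (1 - t) • peel x t + t • (Real.sign ∘ x) := by
  rw [peel, smul_inv_smul₀ (sub_pos.2 ht).ne', sub_add_cancel]

lemma abs_peel_apply (ht : t < 1) (hmin : ∀ i, x i ≠ 0 → t ≤ |x i|) (i : Fin n) :
    |peel x t i| = (1 - t)⁻¹ * (|x i| - t * |Real.sign (x i)|) := by
  by_cases hxi : x i = 0
  · simp [peel_apply, hxi]
  rw [peel_apply, abs_mul, abs_mul, abs_of_pos (inv_pos.2 (sub_pos.2 ht)),
    abs_of_nonneg (sub_nonneg.2 (hmin i hxi)), abs_sign_of_ne_zero hxi]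
  ring

lemma peel_mem_cube (ht : t < 1) (hmin : ∀ i, x i ≠ 0 → t ≤ |x i|) (hx : x ∈ cube n) :
    peel x t ∈ cube n := fun i => by
  rw [abs_peel_apply ht hmin, inv_mul_le_one₀ (sub_pos.2 ht)]
  by_cases hxi : x i = 0
  · simp [hxi, ht.le]
  · rw [abs_sign_of_ne_zero hxi]
    linarith [hx i]

lemma peel_signLE (ht : t < 1) (hmin : ∀ i, x i ≠ 0 → t ≤ |x i|) : SignLE (peel x t) x :=
    fun i hi => by
  have hxi : x i ≠ 0 := fun h => hi (by simp [peel_apply, h])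
  have hpos : 0 < |x i| - t :=
    (sub_nonneg.2 (hmin i hxi)).lt_of_ne' fun h => hi (by simp [peel_apply, h])
  have heq : peel x t i * x i = (1 - t)⁻¹ * ((|x i| - t) * (Real.sign (x i) * x i)) := by
    rw [peel_apply]
    ring
  rw [heq, sign_mul_self_eq_abs]
  exact mul_pos (inv_pos.2 (sub_pos.2 ht)) (mul_pos hpos (abs_pos.2 hxi))

lemma sum_abs_peel (ht : t < 1) (hmin : ∀ i, x i ≠ 0 → t ≤ |x i|) :
    ∑ i, |peel x t i| = (1 - t)⁻¹ * (∑ i, |x i| - t * ∑ i, |Real.sign (x i)|) := by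
  simp_rw [abs_peel_apply ht hmin, ← mul_sum, sum_sub_distrib, mul_sum]

end Peel

lemma exists_peel_step {x : Fin n → ℝ} (hx : x ∈ cube n) (h1 : 1 < ∑ i, |x i|)
    (hne : x ≠ Real.sign ∘ x) :
    ∃ t, 0 ≤ t ∧ t < 1 ∧ (∀ i, x i ≠ 0 → t ≤ |x i|) ∧ 1 ≤ ∑ i, |peel x t i| ∧
      (∑ i, |peel x t i| = 1 ∨ ∃ i, x i ≠ 0 ∧ peel x t i = 0) := by
  obtain ⟨i₀, hi₀, hmin⟩ := exists_min_image {i | x i ≠ 0} (fun i => |x i|) <| by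
    obtain ⟨i, -, hi⟩ := exists_ne_zero_of_sum_ne_zero (h1.trans' one_pos).ne'
    exact ⟨i, mem_filter.2 ⟨mem_univ i, abs_ne_zero.1 hi⟩⟩
  simp only [mem_filter, mem_univ, true_and] at hi₀ hmin
  have hm : |x i₀| < 1 := by
    refine lt_of_le_of_ne (hx i₀) fun h => hne (funext fun i => ?_)
    by_cases hxi : x i = 0
    · simp [hxi]
    · have habs : |x i| = 1 := le_antisymm (hx i) (h ▸ hmin i hxi)
      show x i = Real.sign (x i)
      conv_lhs => rw [← sign_mul_abs_eq (x i), habs, mul_one]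
  set k := ∑ i, |Real.sign (x i)|
  have hk : 1 < k := (isOuterSign_sign hx h1).one_lt
  set c := (∑ i, |x i| - 1) / (k - 1)
  have hc : 0 < c := div_pos (sub_pos.2 h1) (sub_pos.2 hk)
  have hck : c * (k - 1) = ∑ i, |x i| - 1 := div_mul_cancel₀ _ (sub_pos.2 hk).ne'
  -- `peel x c` lies on the boundary of `◇ⁿ`; stopping earlier, at the smallest nonzero `|x i|`,
  -- kills a coordinate instead.
  set t := min |x i₀| c
  have ht : t < 1 := (min_le_left _ _).trans_lt hm
  have htmin : ∀ i, x i ≠ 0 → t ≤ |x i| := fun i hi => (min_le_left _ _).trans (hmin i hi)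
  have hsum := sum_abs_peel ht htmin
  have h1t : 0 < 1 - t := sub_pos.2 ht
  refine ⟨t, le_min (abs_nonneg _) hc.le, ht, htmin, ?_, ?_⟩
  · rw [hsum, le_inv_mul_iff₀ h1t]
    nlinarith [min_le_right |x i₀| c]
  · rcases min_choice |x i₀| c with h | h
    · have h' : t = |x i₀| := h
      exact .inr ⟨i₀, hi₀, by rw [peel_apply, h', sub_self, mul_zero, mul_zero]⟩
    · have h' : t = c := h
      left
      rw [hsum, inv_mul_eq_one₀ h1t.ne', h']
      linarith

lemma SignLE.card_lt {v x : Fin n → ℝ} (h : SignLE v x) {i : Fin n} (hx : x i ≠ 0)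
    (hv : v i = 0) : #{i | v i ≠ 0} < #{i | x i ≠ 0} := by
  refine card_lt_card ⟨fun j hj => ?_, fun hsub => ?_⟩
  · simp only [mem_filter, mem_univ, true_and] at hj ⊢
    exact fun hxj => by simpa [hxj] using h j hj
  · simpa [hv] using hsub (mem_filter.2 ⟨mem_univ i, hx⟩)

def HasConformalCarrier (K : SimplicialComplex ℝ (Fin n → ℝ)) (x : Fin n → ℝ) : Prop :=
  ∃ τ C, IsJoinFace K τ C ∧ (∀ v ∈ τ ∪ C, SignLE v x) ∧ x ∈ convexHull ℝ ↑(τ ∪ C)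

variable {K : SimplicialComplex ℝ (Fin n → ℝ)}

lemma hasConformalCarrier_of_sum_abs_eq_one (hK : K.space = octa n) {x : Fin n → ℝ}
    (hx : ∑ i, |x i| = 1) : HasConformalCarrier K x := by
  obtain ⟨τ, hτ, hxτ, hv⟩ := exists_face_signLE hK hx
  exact ⟨τ, ∅, ⟨.inr hτ, fun v hv' => (hv v hv').1, by simp, by simp, by simp⟩,
    by simpa using fun v hv' => (hv v hv').2, by simpa using hxτ⟩

lemma IsOuterSign.hasConformalCarrier {q : Fin n → ℝ} (hq : IsOuterSign q) :
    HasConformalCarrier K q :=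
  ⟨∅, {q}, ⟨.inl rfl, by simp, by simpa using hq, by simp, by simp⟩, by simpa using refl q,
    by simp⟩

lemma HasConformalCarrier.of_peel {x x' : Fin n → ℝ} (h : HasConformalCarrier K x')
    (hx' : SignLE x' x) (hs : IsOuterSign (Real.sign ∘ x)) {t : ℝ} (ht₀ : 0 ≤ t) (ht₁ : t ≤ 1)
    (hx : x = (1 - t) • x' + t • (Real.sign ∘ x)) : HasConformalCarrier K x := by
  obtain ⟨τ, C, hf, hv, hx'f⟩ := h
  have hvx : ∀ v ∈ τ ∪ C, SignLE v x := fun v hv' => (hv v hv').trans hx'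
  have hvs : ∀ v ∈ τ ∪ C, SignLE v (Real.sign ∘ x) :=
    fun v hv' => (hvx v hv').trans (signLE_sign_right x)
  refine ⟨τ, insert (Real.sign ∘ x) C, ⟨hf.base, hf.on_sphere, ?_, ?_, ?_⟩, ?_, ?_⟩
  · simpa [forall_mem_insert] using ⟨hs, hf.outer⟩
  · rw [coe_insert]
    exact hf.chain.insert fun q hq _ => .inr (hvs q (mem_union_right τ hq))
  · intro v hvτ q hq
    rcases mem_insert.1 hq with rfl | hq
    · exact hvs v (mem_union_left C hvτ)
    · exact hf.signLE v hvτ q hq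
  · intro v hv'
    rcases mem_union.1 hv' with hv' | hv'
    · exact hvx v (mem_union_left _ hv')
    rcases mem_insert.1 hv' with rfl | hv'
    · exact signLE_sign_left x
    · exact hvx v (mem_union_right τ hv')
  · have hsub : ↑(τ ∪ C) ⊆ (↑(τ ∪ insert (Real.sign ∘ x) C) : Set (Fin n → ℝ)) :=
      coe_subset.2 (union_subset_union_right (subset_insert _ C))
    have hmem := convex_convexHull ℝ _ (convexHull_mono hsub hx'f)
      (subset_convexHull ℝ _ (mem_coe.2 (mem_union_right τ (mem_insert_self _ C))))
      (sub_nonneg.2 ht₁) ht₀ (by ring)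
    rwa [← hx] at hmem

lemma hasConformalCarrier_of_mem_cube (hK : K.space = octa n) {x : Fin n → ℝ}
    (hx : x ∈ cube n) (h1 : 1 ≤ ∑ i, |x i|) : HasConformalCarrier K x := by
  generalize hN : #{i | x i ≠ 0} = N
  induction N using Nat.strong_induction_on generalizing x with
  | _ N ih =>
  rcases h1.eq_or_lt with h1 | h1
  · exact hasConformalCarrier_of_sum_abs_eq_one hK h1.symm
  have hs := isOuterSign_sign hx h1
  by_cases hxs : x = Real.sign ∘ x
  · rw [hxs]
    exact hs.hasConformalCarrier
  obtain ⟨t, ht₀, ht₁, hmin, h1', hcase⟩ := exists_peel_step hx h1 hxs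
  refine .of_peel ?_ (peel_signLE ht₁ hmin) hs ht₀ ht₁.le (eq_peel ht₁)
  rcases hcase with h' | ⟨i, hxi, hpi⟩
  · exact hasConformalCarrier_of_sum_abs_eq_one hK h'
  · exact ih _ (hN ▸ (peel_signLE ht₁ hmin).card_lt hxi hpi) (peel_mem_cube ht₁ hmin hx) h1' rfl

lemma extendToCube_space (hK : K.space = octa n) : (extendToCube K hK).space = cube n := by
  refine subset_antisymm (fun x hx => ?_) fun x hx => ?_
  · obtain ⟨f, hf, hxf⟩ := SimplicialComplex.mem_space_iff.1 hx
    refine convexHull_min (fun v hv => ?_) convex_cube hxf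
    rcases hf with hf | ⟨τ, C, hf, -, rfl⟩
    · exact octa_subset_cube (hK ▸ K.subset_space hf hv)
    rcases mem_union.1 hv with hv | hv
    · exact octa_subset_cube (hf.on_sphere v hv).le
    · exact (hf.outer v hv).mem_cube
  rcases le_or_gt (∑ i, |x i|) 1 with h | h
  · obtain ⟨σ, hσ, hxσ⟩ := K.mem_space_iff.1 (hK ▸ h : x ∈ K.space)
    exact SimplicialComplex.mem_space_iff.2 ⟨σ, .inl hσ, hxσ⟩
  · obtain ⟨τ, C, hf, -, hxf⟩ := hasConformalCarrier_of_mem_cube hK hx h.le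
    exact SimplicialComplex.mem_space_iff.2
      ⟨τ ∪ C, hf.union_mem (convexHull_nonempty_iff.1 ⟨x, hxf⟩), hxf⟩

lemma extendToCube_faces_finite (hK : K.space = octa n) (hfin : K.faces.Finite) :
    (extendToCube K hK).faces.Finite := by
  have hS : {q : Fin n → ℝ | IsOuterSign q}.Finite :=
    (Set.Finite.pi fun _ => Set.toFinite {-1, 0, 1}).subset fun q hq i _ => by
      rw [← hq.sign_eq i]
      rcases Real.sign_apply_eq (q i) with h | h | h <;> simp [h]
  have hC : {C : Finset (Fin n → ℝ) | ∀ q ∈ C, IsOuterSign q}.Finite :=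
    hS.finite_subsets.preimage coe_injective.injOn
  refine (hfin.union ((hfin.insert ∅).image2 (· ∪ ·) hC)).subset ?_
  rintro f (hf | ⟨τ, C, hf, -, rfl⟩)
  · exact .inl hf
  · exact .inr ⟨τ, hf.base, C, hf.outer, rfl⟩

lemma mem_vertices_extendToCube (hK : K.space = octa n) {x : Fin n → ℝ}
    (hx : x ∈ (extendToCube K hK).vertices) : x ∈ K.vertices ∨ IsOuterSign x := by
  rcases hx with hx | ⟨τ, C, hf, ⟨q, hq⟩, hτC⟩
  · exact .inl hx
  · obtain rfl : q = x := mem_singleton.1 (hτC ▸ mem_union_right τ hq)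
    exact .inr (hf.outer q hq)

/-! ### Labels -/

noncomputable def cubeLabel (lab : (Fin n → ℝ) → Fin n → ℝ) (x : Fin n → ℝ) : Fin n → ℝ :=
  if h : ∃ j, x ∉ octa n ∧ x j ≠ 0 then Pi.single h.choose (Real.sign (x h.choose)) else lab x

variable {lab : (Fin n → ℝ) → Fin n → ℝ}

lemma cubeLabel_of_mem_octa {x : Fin n → ℝ} (hx : x ∈ octa n) : cubeLabel lab x = lab x :=
  dif_neg fun ⟨_, h, _⟩ => h hx

lemma IsOuterSign.exists_cubeLabel_eq {q : Fin n → ℝ} (hq : IsOuterSign q) :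
    ∃ j, q j ≠ 0 ∧ cubeLabel lab q = Pi.single j (Real.sign (q j)) := by
  have h : ∃ j, q ∉ octa n ∧ q j ≠ 0 := by
    obtain ⟨j, -, hj⟩ := exists_ne_zero_of_sum_ne_zero (hq.one_lt.trans' one_pos).ne'
    exact ⟨j, hq.notMem_octa, abs_ne_zero.1 hj⟩
  exact ⟨h.choose, h.choose_spec.2, dif_pos h⟩

lemma single_sign_mem_extOcta {r : ℝ} (hr : r ≠ 0) (j : Fin n) :
    Pi.single j (Real.sign r) ∈ extOcta n := by
  rcases Real.sign_apply_eq_of_ne_zero r hr with h | h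
  · exact ⟨j, .inr (by rw [h, Pi.single_neg])⟩
  · exact ⟨j, .inl (by rw [h])⟩

lemma single_ne_neg_single {i j : Fin n} {a b : ℝ} (ha : a ≠ 0) (h : i = j → b = a) :
    (Pi.single i a : Fin n → ℝ) ≠ -Pi.single j b := by
  intro heq
  have hi := congrFun heq i
  by_cases hij : i = j
  · subst hij
    simp only [h rfl, Pi.single_eq_same, Pi.neg_apply] at hi
    exact ha (by linarith)
  · simp [Pi.single_eq_of_ne hij] at hi
    exact ha hi

lemma exists_eq_single_sign {l v : Fin n → ℝ} (hl : l ∈ extOcta n)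
    (hbd : ∀ i, (0 ≤ v i → l ≠ -Pi.single i 1) ∧ (v i ≤ 0 → l ≠ Pi.single i 1)) :
    ∃ j, v j ≠ 0 ∧ l = Pi.single j (Real.sign (v j)) := by
  obtain ⟨j, rfl | rfl⟩ := hl
  · have hv : 0 < v j := lt_of_not_ge fun h => (hbd j).2 h rfl
    exact ⟨j, hv.ne', by rw [Real.sign_of_pos hv]⟩
  · have hv : v j < 0 := lt_of_not_ge fun h => (hbd j).1 h rfl
    exact ⟨j, hv.ne, by rw [Real.sign_of_neg hv, Pi.single_neg]⟩

lemma cubeLabel_mem_extOcta (hlab : ∀ x ∈ K.vertices, lab x ∈ extOcta n)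
    (hK : K.space = octa n) {x : Fin n → ℝ} (hx : x ∈ (extendToCube K hK).vertices) :
    cubeLabel lab x ∈ extOcta n := by
  rcases mem_vertices_extendToCube hK hx with hxK | hxs
  · rw [cubeLabel_of_mem_octa (hK ▸ K.vertices_subset_space hxK)]
    exact hlab x hxK
  · obtain ⟨j, hj, hl⟩ := hxs.exists_cubeLabel_eq (lab := lab)
    rw [hl]
    exact single_sign_mem_extOcta hj j

lemma IsJoinFace.exists_cubeLabel_eq
    (hsph : ∀ v ∈ K.vertices, ∑ i, |v i| = 1 →
      ∃ j, v j ≠ 0 ∧ lab v = Pi.single j (Real.sign (v j)))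
    {τ C : Finset (Fin n → ℝ)} (hf : IsJoinFace K τ C) {v : Fin n → ℝ} (hv : v ∈ τ ∪ C) :
    ∃ j, v j ≠ 0 ∧ cubeLabel lab v = Pi.single j (Real.sign (v j)) := by
  rcases mem_union.1 hv with hv | hv
  · have hvK : v ∈ K.vertices :=
      K.down_closed (hf.mem_faces ⟨v, hv⟩) (singleton_subset_iff.2 hv) (singleton_nonempty v)
    rw [cubeLabel_of_mem_octa (hf.on_sphere v hv).le]
    exact hsph v hvK (hf.on_sphere v hv)
  · exact (hf.outer v hv).exists_cubeLabel_eq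

/-- All labels on a join face are `sign (t j) • e_j` for the top `t` of its chain, so no two of
them are opposite. -/
lemma IsJoinFace.cubeLabel_ne_neg
    (hsph : ∀ v ∈ K.vertices, ∑ i, |v i| = 1 →
      ∃ j, v j ≠ 0 ∧ lab v = Pi.single j (Real.sign (v j)))
    {τ C : Finset (Fin n → ℝ)} (hf : IsJoinFace K τ C) (hC : C.Nonempty) {v₁ v₂ : Fin n → ℝ}
    (hv₁ : v₁ ∈ τ ∪ C) (hv₂ : v₂ ∈ τ ∪ C) :
    cubeLabel lab v₁ ≠ -cubeLabel lab v₂ := by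
  obtain ⟨t, ht, htop⟩ := exists_signLE_top hC hf.outer hf.chain
  have hsign : ∀ v ∈ τ ∪ C, SignLE v t := fun v hv =>
    (mem_union.1 hv).elim (fun hv => hf.signLE v hv t ht) (htop v)
  obtain ⟨j₁, hj₁, h₁⟩ := hf.exists_cubeLabel_eq hsph hv₁
  obtain ⟨j₂, hj₂, h₂⟩ := hf.exists_cubeLabel_eq hsph hv₂
  rw [h₁, h₂, ← (hf.outer t ht).apply_eq_sign_of_signLE (hsign v₁ hv₁) hj₁,
    ← (hf.outer t ht).apply_eq_sign_of_signLE (hsign v₂ hv₂) hj₂]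
  refine single_ne_neg_single ?_ fun h => h ▸ rfl
  rw [(hf.outer t ht).apply_eq_sign_of_signLE (hsign v₁ hv₁) hj₁]
  exact Real.sign_eq_zero_iff.not.2 hj₁

lemma cubeLabel_ne_of_abs_eq_one
    (hsph : ∀ v ∈ K.vertices, ∑ i, |v i| = 1 →
      ∃ j, v j ≠ 0 ∧ lab v = Pi.single j (Real.sign (v j)))
    (hK : K.space = octa n) {x : Fin n → ℝ}
    (hx : x ∈ (extendToCube K hK).vertices) {i : Fin n} (hi : x i = -1 ∨ x i = 1) :
    cubeLabel lab x ≠ (-(x i)) • Pi.single i 1 := by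
  have hsi : Real.sign (x i) = x i := by
    rcases hi with h | h <;> simp [h, Real.sign_of_neg]
  obtain ⟨j, hj, hl⟩ : ∃ j, x j ≠ 0 ∧ cubeLabel lab x = Pi.single j (Real.sign (x j)) := by
    rcases mem_vertices_extendToCube hK hx with hxK | hxs
    · have hoct : x ∈ octa n := hK ▸ K.vertices_subset_space hxK
      have h1 : ∑ j, |x j| = 1 := le_antisymm hoct <| by
        simpa [show |x i| = 1 by rcases hi with h | h <;> simp [h]] using
          single_le_sum (fun j _ => abs_nonneg (x j)) (mem_univ i)
      rw [cubeLabel_of_mem_octa hoct]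
      exact hsph x hxK h1
    · exact hxs.exists_cubeLabel_eq
  rw [hl, neg_smul, ← Pi.single_smul, smul_eq_mul, mul_one]
  exact single_ne_neg_single (Real.sign_eq_zero_iff.not.2 hj) fun h => by subst h; exact hsi.symm

end CubeOctahedron

open CubeOctahedron

/-- The Cubical Sperner lemma with Octahedral Labels implies the
Octahedral Sperner lemma with Octahedral Labels. -/
theorem cubical_sperner_implies_octahedral_sperner :
    CubicalSpernerStatement → OctahedralSpernerStatement := by
  intro hcube n hn K hfin hK lab hlab hbd
  have hsph v (hv : v ∈ K.vertices) (h1 : ∑ i, |v i| = 1) :=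
    exists_eq_single_sign (hlab v hv) (hbd v hv h1)
  obtain ⟨σ, hσ, v₁, hv₁, v₂, hv₂, hcompl⟩ := hcube n hn (extendToCube K hK)
    (extendToCube_faces_finite hK hfin) (extendToCube_space hK) (cubeLabel lab)
    (fun x hx => cubeLabel_mem_extOcta hlab hK hx)
    (fun x hx i hi => cubeLabel_ne_of_abs_eq_one hsph hK hx hi)
  rcases hσ with hσ | ⟨τ, C, hf, hC, rfl⟩
  · refine ⟨σ, hσ, v₁, hv₁, v₂, hv₂, ?_⟩
    rwa [cubeLabel_of_mem_octa (hK ▸ K.subset_space hσ hv₁),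
      cubeLabel_of_mem_octa (hK ▸ K.subset_space hσ hv₂)] at hcompl
  · exact absurd hcompl (hf.cubeLabel_ne_neg hsph hC hv₁ hv₂)
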